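/- arXiv:2011.11907 — 5 statements merged into one kernel-verified Lean document; each statement's English description precedes it below -/
import Mathlib

section
/- Let d ≥ 1 and let W = (w_1,…,w_d) and W' = (w'_1,…,w'_d) be weight vectors with all entries positive; set M = max_{1≤i≤d}(w_i² / w'_i²) and N = min_{1≤i≤d}(w_i² / w'_i²). For every R > 0, every c > 1, and all nonzero x, y ∈ ℝ^d: if D_{W'}(x,y) ≥ cR, then D_W(x,y) ≥ arccos( min( 1, (M/N)·cos(cR) + (M − N)/N ) ). -/
/-!
For any vectors, `‖p‖‖q‖ + ⟪p, q⟫ = ½ min_{t ≠ 0} ‖t • p + t⁻¹ • q‖²` (AM–GM on the squared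
norms). Hence a linear map `T` with `N‖z‖² ≤ ‖T z‖² ≤ M‖z‖²` multiplies this quantity by at most
`M`, while it multiplies `‖p‖‖q‖` by at least `N`; dividing, `N (1 + cos ∠(T u, T v)) ≤
M (1 + cos ∠(u, v))`. The weight `W` is the diagonal map `W / W'` applied to `W' ∘ x`, with
`N ≤ (W_i / W'_i)² ≤ M`.
-/

open Real InnerProductGeometry RealInnerProductSpace

section InnerProductSpace

variable {E F : Type*} [NormedAddCommGroup E] [InnerProductSpace ℝ E]
  [NormedAddCommGroup F] [InnerProductSpace ℝ F]

theorem two_mul_norm_mul_norm_add_inner_le (p q : F) {t : ℝ} (ht : t ≠ 0) :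
    2 * (‖p‖ * ‖q‖ + ⟪p, q⟫) ≤ ‖t • p + t⁻¹ • q‖ ^ 2 := by
  have hamgm : 2 * (‖p‖ * ‖q‖) ≤ (|t| * ‖p‖) ^ 2 + (|t|⁻¹ * ‖q‖) ^ 2 := by
    have ht' : |t| * |t|⁻¹ = 1 := mul_inv_cancel₀ (abs_ne_zero.mpr ht)
    nlinarith [sq_nonneg (|t| * ‖p‖ - |t|⁻¹ * ‖q‖)]
  rw [norm_add_sq_real, norm_smul, norm_smul, inner_smul_left, inner_smul_right, norm_inv,
    Real.norm_eq_abs, conj_trivial, mul_inv_cancel_left₀ ht]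
  linarith

theorem exists_norm_smul_add_inv_smul_sq_eq {u v : E} (hu : u ≠ 0) (hv : v ≠ 0) :
    ∃ t : ℝ, t ≠ 0 ∧ ‖t • u + t⁻¹ • v‖ ^ 2 = 2 * (‖u‖ * ‖v‖ + ⟪u, v⟫) := by
  have hu' : 0 < ‖u‖ := norm_pos_iff.mpr hu
  have hv' : 0 < ‖v‖ := norm_pos_iff.mpr hv
  set t := √(‖v‖ / ‖u‖)
  have ht : 0 < t := Real.sqrt_pos.mpr (div_pos hv' hu')
  have ht2 : t ^ 2 = ‖v‖ / ‖u‖ := Real.sq_sqrt (div_pos hv' hu').le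
  refine ⟨t, ht.ne', ?_⟩
  rw [norm_add_sq_real, norm_smul, norm_smul, inner_smul_left, inner_smul_right, norm_inv,
    Real.norm_eq_abs, abs_of_pos ht, conj_trivial, mul_inv_cancel_left₀ ht.ne',
    mul_pow, mul_pow, inv_pow, ht2, inv_div]
  field_simp
  ring

theorem norm_mul_norm_add_inner_map_le (T : E →ₗ[ℝ] F) {M : ℝ}
    (hT : ∀ z, ‖T z‖ ^ 2 ≤ M * ‖z‖ ^ 2) (u v : E) :
    ‖T u‖ * ‖T v‖ + ⟪T u, T v⟫ ≤ M * (‖u‖ * ‖v‖ + ⟪u, v⟫) := by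
  rcases eq_or_ne u 0 with rfl | hu
  · simp
  rcases eq_or_ne v 0 with rfl | hv
  · simp
  obtain ⟨t, ht, hteq⟩ := exists_norm_smul_add_inv_smul_sq_eq hu hv
  have hscaled := calc
    2 * (‖T u‖ * ‖T v‖ + ⟪T u, T v⟫) ≤ ‖t • T u + t⁻¹ • T v‖ ^ 2 :=
      two_mul_norm_mul_norm_add_inner_le _ _ ht
    _ = ‖T (t • u + t⁻¹ • v)‖ ^ 2 := by simp
    _ ≤ M * ‖t • u + t⁻¹ • v‖ ^ 2 := hT _
    _ = 2 * (M * (‖u‖ * ‖v‖ + ⟪u, v⟫)) := by rw [hteq]; ring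
  linarith

theorem mul_one_add_cos_angle_map_le (T : E →ₗ[ℝ] F) {M N : ℝ} (hN : 0 ≤ N)
    (hlow : ∀ z, N * ‖z‖ ^ 2 ≤ ‖T z‖ ^ 2) (hup : ∀ z, ‖T z‖ ^ 2 ≤ M * ‖z‖ ^ 2)
    {u v : E} (hu : u ≠ 0) (hv : v ≠ 0) :
    N * (1 + cos (angle (T u) (T v))) ≤ M * (1 + cos (angle u v)) := by
  have huv : 0 < ‖u‖ * ‖v‖ := mul_pos (norm_pos_iff.mpr hu) (norm_pos_iff.mpr hv)
  have hnorm : N * (‖u‖ * ‖v‖) ≤ ‖T u‖ * ‖T v‖ := by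
    refine le_of_pow_le_pow_left₀ two_ne_zero (by positivity) ?_
    calc (N * (‖u‖ * ‖v‖)) ^ 2 = (N * ‖u‖ ^ 2) * (N * ‖v‖ ^ 2) := by ring
      _ ≤ ‖T u‖ ^ 2 * ‖T v‖ ^ 2 :=
        mul_le_mul (hlow u) (hlow v) (by positivity) (by positivity)
      _ = (‖T u‖ * ‖T v‖) ^ 2 := by ring
  have hcos : 0 ≤ 1 + cos (angle (T u) (T v)) := by linarith [neg_one_le_cos (angle (T u) (T v))]
  refine le_of_mul_le_mul_right ?_ huv
  calc N * (1 + cos (angle (T u) (T v))) * (‖u‖ * ‖v‖)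
      ≤ ‖T u‖ * ‖T v‖ * (1 + cos (angle (T u) (T v))) := by
        rw [mul_right_comm]; exact mul_le_mul_of_nonneg_right hnorm hcos
    _ = ‖T u‖ * ‖T v‖ + ⟪T u, T v⟫ := by rw [← cos_angle_mul_norm_mul_norm]; ring
    _ ≤ M * (‖u‖ * ‖v‖ + ⟪u, v⟫) := norm_mul_norm_add_inner_map_le T hup u v
    _ = M * (1 + cos (angle u v)) * (‖u‖ * ‖v‖) := by rw [← cos_angle_mul_norm_mul_norm]; ring

theorem arccos_min_le_angle_map (T : E →ₗ[ℝ] F) {M N : ℝ} (hN : 0 < N)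
    (hlow : ∀ z, N * ‖z‖ ^ 2 ≤ ‖T z‖ ^ 2) (hup : ∀ z, ‖T z‖ ^ 2 ≤ M * ‖z‖ ^ 2)
    {u v : E} (hu : u ≠ 0) (hv : v ≠ 0) {φ : ℝ} (hφ : 0 ≤ φ) (hφuv : φ ≤ angle u v) :
    arccos (min 1 (M / N * cos φ + (M - N) / N)) ≤ angle (T u) (T v) := by
  have hcos : cos (angle u v) ≤ cos φ :=
    cos_le_cos_of_nonneg_of_le_pi hφ (angle_le_pi u v) hφuv
  have hdist := mul_one_add_cos_angle_map_le T hN.le hlow hup hu hv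
  have hM : 0 ≤ M := by
    have hNM := le_of_mul_le_mul_right ((hlow u).trans (hup u)) (pow_pos (norm_pos_iff.mpr hu) 2)
    linarith
  have hbound : cos (angle (T u) (T v)) ≤ M / N * cos φ + (M - N) / N := by
    rw [← sub_nonneg]
    have : M / N * cos φ + (M - N) / N - cos (angle (T u) (T v))
        = (M * (1 + cos φ) - N * (1 + cos (angle (T u) (T v)))) / N := by
      field_simp; ring
    rw [this]
    exact div_nonneg (by nlinarith) hN.le
  rw [← arccos_cos (angle_nonneg (T u) (T v)) (angle_le_pi (T u) (T v))]
  exact arccos_le_arccos (le_min (cos_le_one _) hbound)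

end InnerProductSpace

section EuclideanSpace

variable {ι : Type*} [Fintype ι]

theorem angle_toLp (f g : ι → ℝ) :
    angle (WithLp.toLp 2 f : EuclideanSpace ℝ ι) (WithLp.toLp 2 g) =
      arccos ((∑ i, f i * g i) / (√(∑ i, f i ^ 2) * √(∑ i, g i ^ 2))) := by
  simp [angle, EuclideanSpace.norm_eq, PiLp.inner_apply, mul_comm]

variable [DecidableEq ι]

theorem toLpLin_diagonal_toLp (b f : ι → ℝ) :
    Matrix.toLpLin 2 2 (Matrix.diagonal b) (WithLp.toLp 2 f) =
      WithLp.toLp 2 (fun i => b i * f i) := by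
  rw [Matrix.toLpLin_apply]
  exact congrArg _ (funext (Matrix.mulVec_diagonal b f))

theorem norm_sq_toLpLin_diagonal_le {b : ι → ℝ} {M : ℝ} (hb : ∀ i, b i ^ 2 ≤ M)
    (z : EuclideanSpace ℝ ι) :
    ‖Matrix.toLpLin 2 2 (Matrix.diagonal b) z‖ ^ 2 ≤ M * ‖z‖ ^ 2 := by
  simp only [EuclideanSpace.norm_sq_eq, Matrix.toLpLin_apply, Matrix.mulVec_diagonal,
    Finset.mul_sum, norm_mul, mul_pow, Real.norm_eq_abs, sq_abs]
  exact Finset.sum_le_sum fun i _ => mul_le_mul_of_nonneg_right (hb i) (sq_nonneg _)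

theorem le_norm_sq_toLpLin_diagonal {b : ι → ℝ} {N : ℝ} (hb : ∀ i, N ≤ b i ^ 2)
    (z : EuclideanSpace ℝ ι) :
    N * ‖z‖ ^ 2 ≤ ‖Matrix.toLpLin 2 2 (Matrix.diagonal b) z‖ ^ 2 := by
  simp only [EuclideanSpace.norm_sq_eq, Matrix.toLpLin_apply, Matrix.mulVec_diagonal,
    Finset.mul_sum, norm_mul, mul_pow, Real.norm_eq_abs, sq_abs]
  exact Finset.sum_le_sum fun i _ => mul_le_mul_of_nonneg_right (hb i) (sq_nonneg _)

end EuclideanSpace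

/-- Theorem 1(3) of the paper, lower bound `(cR)^↓` for the weighted angular distance:
if `D_{W'}(x,y) ≥ cR` then `D_W(x,y) ≥ arccos(min(1, (M/N)·cos(cR) + (M − N)/N))`, where
`M = max_i (w_i²/w'_i²)` and `N = min_i (w_i²/w'_i²)`. -/
theorem weighted_angular_lower_bound
    (d : ℕ) (hd : 1 ≤ d)
    (W W' : Fin d → ℝ) (hW : ∀ i, 0 < W i) (hW' : ∀ i, 0 < W' i)
    (M N : ℝ)
    (hM : M = Finset.univ.sup' (Finset.univ_nonempty_iff.mpr (Fin.pos_iff_nonempty.mp hd))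
        (fun i => (W i) ^ 2 / (W' i) ^ 2))
    (hN : N = Finset.univ.inf' (Finset.univ_nonempty_iff.mpr (Fin.pos_iff_nonempty.mp hd))
        (fun i => (W i) ^ 2 / (W' i) ^ 2))
    (R : ℝ) (hR : 0 < R) (c : ℝ) (hc : 1 < c)
    (x y : Fin d → ℝ) (hx : x ≠ 0) (hy : y ≠ 0)
    (h : c * R ≤ Real.arccos ((∑ i, (W' i * x i) * (W' i * y i)) /
          (Real.sqrt (∑ i, (W' i * x i) ^ 2) * Real.sqrt (∑ i, (W' i * y i) ^ 2)))) :
    Real.arccos (min 1 (M / N * Real.cos (c * R) + (M - N) / N)) ≤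
      Real.arccos ((∑ i, (W i * x i) * (W i * y i)) /
          (Real.sqrt (∑ i, (W i * x i) ^ 2) * Real.sqrt (∑ i, (W i * y i) ^ 2))) := by
  set b : Fin d → ℝ := fun i => W i / W' i
  have hbN : ∀ i, N ≤ b i ^ 2 := fun i => by
    rw [div_pow, hN]; exact Finset.inf'_le _ (Finset.mem_univ i)
  have hbM : ∀ i, b i ^ 2 ≤ M := fun i => by
    rw [div_pow, hM]; exact Finset.le_sup' (fun j => W j ^ 2 / W' j ^ 2) (Finset.mem_univ i)
  have hN0 : 0 < N := by
    rw [hN, Finset.lt_inf'_iff]; exact fun i _ => div_pos (pow_pos (hW i) 2) (pow_pos (hW' i) 2)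
  have hb : ∀ z : Fin d → ℝ, Matrix.toLpLin 2 2 (Matrix.diagonal b)
      (WithLp.toLp 2 fun i => W' i * z i) = WithLp.toLp 2 fun i => W i * z i := fun z => by
    rw [toLpLin_diagonal_toLp]
    congr 1; funext i
    show W i / W' i * (W' i * z i) = W i * z i
    field_simp [(hW' i).ne']
  have hne : ∀ z : Fin d → ℝ, z ≠ 0 →
      (WithLp.toLp 2 fun i => W' i * z i : EuclideanSpace ℝ (Fin d)) ≠ 0 := fun z hz h0 =>
    hz (funext fun i => by
      simpa [(hW' i).ne'] using congrFun (congrArg WithLp.ofLp h0) i)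
  rw [← angle_toLp] at h
  rw [← angle_toLp, ← hb x, ← hb y]
  exact arccos_min_le_angle_map _ hN0 (le_norm_sq_toLpLin_diagonal hbN)
    (norm_sq_toLpLin_diagonal_le hbM) (hne x hx) (hne y hy) (by positivity) h
end

section
/- Let w > 0, let s, t ∈ ℝ, and let i be a positive integer. Then the Lebesgue measure of the set { b ∈ [0, w] : ⌊(s + b·i)/w⌋ = ⌊(t + b·i)/w⌋ } equals max(0, w − |s − t|). In particular, this measure does not depend on i. -/
open MeasureTheory Set ENNReal

lemma fract_set_measurable (c d a : ℝ) :
    MeasurableSet {x : ℝ | x ∈ Set.Ico c d ∧ Int.fract x < a} :=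
  measurableSet_Ico.inter (measurableSet_lt measurable_fract measurable_const)

lemma fract_lt_unit (c a : ℝ) (h0 : 0 ≤ a) (h1 : a ≤ 1) :
    volume {x : ℝ | x ∈ Set.Ico c (c + 1) ∧ Int.fract x < a} = ENNReal.ofReal a := by
  set m : ℝ := (⌊c⌋ : ℝ) with hm
  have hmc : m ≤ c := Int.floor_le c
  have hcm : c < m + 1 := Int.lt_floor_add_one c
  have hset : {x : ℝ | x ∈ Set.Ico c (c + 1) ∧ Int.fract x < a} =
      Set.Ico c (m + a) ∪ Set.Ico (m + 1) (min (m + 1 + a) (c + 1)) := by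
    ext x
    simp only [Set.mem_setOf_eq, Set.mem_Ico, Set.mem_union, lt_min_iff]
    constructor
    · rintro ⟨⟨hx1, hx2⟩, hfr⟩
      have hfx : Int.fract x = x - (⌊x⌋ : ℝ) := rfl
      have h1' : ⌊c⌋ ≤ ⌊x⌋ := Int.floor_le_floor hx1
      have h2' : ⌊x⌋ < ⌊c⌋ + 2 := by
        rw [Int.floor_lt]; push_cast; linarith
      have hcase : ⌊x⌋ = ⌊c⌋ ∨ ⌊x⌋ = ⌊c⌋ + 1 := by omega
      rcases hcase with hc1 | hc1
      · left
        constructor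
        · exact hx1
        · rw [hc1] at hfx; rw [hm]; linarith
      · right
        have hxfl : ((⌊c⌋ : ℝ) + 1) ≤ x := by
          have := Int.floor_le x
          rw [hc1] at this; push_cast at this; linarith
        refine ⟨by rw [hm]; linarith, ?_, by linarith⟩
        rw [hc1] at hfx; push_cast at hfx; rw [hm]; linarith
    · rintro (⟨hx1, hx2⟩ | ⟨hx1, hx2, hx3⟩)
      · have hfl : ⌊x⌋ = ⌊c⌋ := by
          rw [Int.floor_eq_iff]
          constructor <;> [linarith; push_cast] <;> linarith
        have hfx : Int.fract x = x - (⌊x⌋ : ℝ) := rfl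
        rw [hfl] at hfx
        exact ⟨⟨hx1, by linarith⟩, by rw [hfx]; linarith⟩
      · have hfl : ⌊x⌋ = ⌊c⌋ + 1 := by
          rw [Int.floor_eq_iff]
          constructor <;> push_cast <;> linarith
        have hfx : Int.fract x = x - (⌊x⌋ : ℝ) := rfl
        rw [hfl] at hfx; push_cast at hfx
        exact ⟨⟨by linarith, hx3⟩, by rw [hfx]; linarith⟩
  rw [hset, measure_union _ measurableSet_Ico, Real.volume_Ico, Real.volume_Ico]
  · rcases le_total a (c - m) with hca | hca
    · have h1 : m + a - c ≤ 0 := by linarith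
      have h2 : min (m + 1 + a) (c + 1) = m + 1 + a := min_eq_left (by linarith)
      rw [h2, ENNReal.ofReal_of_nonpos h1]
      rw [show m + 1 + a - (m + 1) = a by ring, zero_add]
    · have h2 : min (m + 1 + a) (c + 1) = c + 1 := min_eq_right (by linarith)
      rw [h2, ← ENNReal.ofReal_add (by linarith) (by linarith)]
      congr 1; ring
  · apply Set.disjoint_left.2
    rintro x ⟨hx1, hx2⟩ ⟨hy1, hy2⟩
    linarith

lemma fract_lt_n (n : ℕ) (c a : ℝ) (h0 : 0 ≤ a) (h1 : a ≤ 1) :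
    volume {x : ℝ | x ∈ Set.Ico c (c + (n : ℝ)) ∧ Int.fract x < a} =
      (n : ℝ≥0∞) * ENNReal.ofReal a := by
  induction n generalizing c with
  | zero => simp
  | succ n ih =>
    have hset : {x : ℝ | x ∈ Set.Ico c (c + ((n + 1 : ℕ) : ℝ)) ∧ Int.fract x < a} =
        {x : ℝ | x ∈ Set.Ico c (c + (n : ℝ)) ∧ Int.fract x < a} ∪
          {x : ℝ | x ∈ Set.Ico (c + (n : ℝ)) (c + (n : ℝ) + 1) ∧ Int.fract x < a} := by
      ext x
      simp only [Set.mem_setOf_eq, Set.mem_Ico, Set.mem_union]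
      push_cast
      constructor
      · rintro ⟨⟨hx1, hx2⟩, hfr⟩
        rcases lt_or_ge x (c + n) with h | h
        · exact Or.inl ⟨⟨hx1, h⟩, hfr⟩
        · exact Or.inr ⟨⟨h, by linarith⟩, hfr⟩
      · rintro (⟨⟨hx1, hx2⟩, hfr⟩ | ⟨⟨hx1, hx2⟩, hfr⟩)
        · exact ⟨⟨hx1, by linarith⟩, hfr⟩
        · exact ⟨⟨by linarith, by linarith⟩, hfr⟩
    rw [hset, measure_union _ (fract_set_measurable _ _ _), ih, fract_lt_unit _ _ h0 h1]
    · push_cast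
      ring
    · apply Set.disjoint_left.2
      rintro x ⟨⟨hx1, hx2⟩, _⟩ ⟨⟨hy1, hy2⟩, _⟩
      linarith

lemma floor_eq_floor_add_iff (X δ : ℝ) (hδ : 0 ≤ δ) :
    ⌊X⌋ = ⌊X + δ⌋ ↔ Int.fract X < 1 - δ := by
  have hfx : Int.fract X = X - (⌊X⌋ : ℝ) := rfl
  constructor
  · intro h
    have h2 := Int.lt_floor_add_one (X + δ)
    rw [← h] at h2
    push_cast at h2
    linarith
  · intro h
    have h1 : ⌊X⌋ ≤ ⌊X + δ⌋ := Int.floor_le_floor (by linarith)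
    have h2 : ⌊X + δ⌋ < ⌊X⌋ + 1 := by
      rw [Int.floor_lt]; push_cast; linarith
    omega

lemma key_half (w : ℝ) (hw : 0 < w) (s t : ℝ) (hst : s ≤ t) (i : ℕ) (hi : 1 ≤ i) :
    volume
        {b : ℝ | b ∈ Set.Ico 0 w ∧ ⌊(s + b * (i : ℝ)) / w⌋ = ⌊(t + b * (i : ℝ)) / w⌋} =
      ENNReal.ofReal (max 0 (w - (t - s))) := by
  have hiR : (1 : ℝ) ≤ (i : ℝ) := by exact_mod_cast hi
  have hiR0 : (0 : ℝ) < (i : ℝ) := by linarith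
  rcases le_or_gt w (t - s) with h | h
  · have hempty :
        {b : ℝ | b ∈ Set.Ico 0 w ∧ ⌊(s + b * (i : ℝ)) / w⌋ = ⌊(t + b * (i : ℝ)) / w⌋} = ∅ := by
      ext b
      simp only [Set.mem_setOf_eq, Set.mem_empty_iff_false, iff_false, not_and]
      intro _
      intro hcontra
      have hYX : (t + b * (i : ℝ)) / w = (s + b * (i : ℝ)) / w + (t - s) / w := by ring
      have hd1 : (1 : ℝ) ≤ (t - s) / w := by
        rw [le_div_iff₀ hw]; linarith
      have := Int.floor_le_floor (le_trans (by linarith :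
          (s + b * (i : ℝ)) / w + 1 ≤ (s + b * (i : ℝ)) / w + (t - s) / w)
          (le_of_eq hYX.symm))
      rw [Int.floor_add_one] at this
      omega
    rw [hempty, measure_empty, max_eq_left (by linarith), ENNReal.ofReal_zero]
  · set δ : ℝ := (t - s) / w with hδdef
    have hδ0 : 0 ≤ δ := div_nonneg (by linarith) hw.le
    have hδ1 : δ < 1 := by rw [hδdef, div_lt_one hw]; linarith
    set a : ℝ := 1 - δ with hadef
    have ha0 : 0 ≤ a := by linarith
    have ha1 : a ≤ 1 := by linarith
    have hsetq :
        {b : ℝ | b ∈ Set.Ico 0 w ∧ ⌊(s + b * (i : ℝ)) / w⌋ = ⌊(t + b * (i : ℝ)) / w⌋} =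
          (· * ((i : ℝ) / w)) ⁻¹' ((s / w + ·) ⁻¹'
            {x : ℝ | x ∈ Set.Ico (s / w) (s / w + (i : ℝ)) ∧ Int.fract x < a}) := by
      ext b
      simp only [Set.mem_setOf_eq, Set.mem_preimage, Set.mem_Ico]
      have hX : s / w + b * ((i : ℝ) / w) = (s + b * (i : ℝ)) / w := by ring
      rw [hX]
      have hYX : (t + b * (i : ℝ)) / w = (s + b * (i : ℝ)) / w + δ := by
        rw [hδdef]; ring
      rw [hYX, floor_eq_floor_add_iff _ _ hδ0]
      have hmem : (0 ≤ b ∧ b < w) ↔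
          (s / w ≤ (s + b * (i : ℝ)) / w ∧ (s + b * (i : ℝ)) / w < s / w + (i : ℝ)) := by
        rw [div_le_div_iff_of_pos_right hw]
        have : s / w + (i : ℝ) = (s + (i : ℝ) * w) / w := by field_simp
        rw [this, div_lt_div_iff_of_pos_right hw]
        constructor
        · rintro ⟨h1, h2⟩
          constructor
          · nlinarith
          · nlinarith
        · rintro ⟨h1, h2⟩
          constructor
          · nlinarith
          · nlinarith
      rw [hmem]
    rw [hsetq]
    rw [Real.volume_preimage_mul_right (by positivity : (i : ℝ) / w ≠ 0)]
    rw [measure_preimage_add]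
    rw [fract_lt_n i (s / w) a ha0 ha1]
    rw [abs_of_pos (by positivity : (0:ℝ) < ((i : ℝ) / w)⁻¹)]
    rw [show ((i : ℕ) : ℝ≥0∞) = ENNReal.ofReal ((i : ℕ) : ℝ) by
      rw [ENNReal.ofReal_natCast]]
    rw [← ENNReal.ofReal_mul (by positivity), ← ENNReal.ofReal_mul (by positivity)]
    rw [max_eq_right (by linarith)]
    congr 1
    have : ((i : ℝ) / w)⁻¹ = w / (i : ℝ) := by rw [inv_div]
    rw [this, hadef, hδdef]
    field_simp

/-- Core of the proof of Lemma 1 of the paper (following Observation 1 of Tao et al.):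
for `b` ranging over `[0, w]`, the Lebesgue measure of the set of shifts `b` on which the
floor hashes of `s` and `t` (with integer stretching factor `i ≥ 1`) collide, i.e.
`⌊(s + b·i)/w⌋ = ⌊(t + b·i)/w⌋`, equals `max 0 (w − |s − t|)`; in particular it does not
depend on `i`. -/
theorem floor_hash_collision_measure
    (w : ℝ) (hw : 0 < w) (s t : ℝ) (i : ℕ) (hi : 1 ≤ i) :
    MeasureTheory.volume
        {b : ℝ | b ∈ Set.Icc 0 w ∧ ⌊(s + b * (i : ℝ)) / w⌋ = ⌊(t + b * (i : ℝ)) / w⌋} =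
      ENNReal.ofReal (max 0 (w - |s - t|)) := by
  set SIco := {b : ℝ | b ∈ Set.Ico 0 w ∧ ⌊(s + b * (i : ℝ)) / w⌋ = ⌊(t + b * (i : ℝ)) / w⌋}
    with hSIco
  have hIccIco :
      volume {b : ℝ | b ∈ Set.Icc 0 w ∧ ⌊(s + b * (i : ℝ)) / w⌋ = ⌊(t + b * (i : ℝ)) / w⌋} =
        volume SIco := by
    apply le_antisymm
    · calc volume {b : ℝ | b ∈ Set.Icc 0 w ∧
            ⌊(s + b * (i : ℝ)) / w⌋ = ⌊(t + b * (i : ℝ)) / w⌋}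
          ≤ volume (SIco ∪ {w}) := by
            apply measure_mono
            rintro b ⟨⟨hb1, hb2⟩, hb3⟩
            rcases lt_or_eq_of_le hb2 with hlt | heq
            · exact Or.inl ⟨⟨hb1, hlt⟩, hb3⟩
            · exact Or.inr (by simp [heq])
        _ ≤ volume SIco + volume {w} := measure_union_le _ _
        _ = volume SIco := by rw [Real.volume_singleton, add_zero]
    · apply measure_mono
      rintro b ⟨⟨hb1, hb2⟩, hb3⟩
      exact ⟨⟨hb1, hb2.le⟩, hb3⟩
  rw [hIccIco]
  rcases le_total s t with hst | hts
  · rw [hSIco, key_half w hw s t hst i hi]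
    congr 2
    rw [abs_sub_comm, abs_of_nonneg (by linarith)]
  · have hsets : SIco =
        {b : ℝ | b ∈ Set.Ico 0 w ∧ ⌊(t + b * (i : ℝ)) / w⌋ = ⌊(s + b * (i : ℝ)) / w⌋} := by
      ext b
      exact ⟨fun ⟨h1, h2⟩ => ⟨h1, h2.symm⟩, fun ⟨h1, h2⟩ => ⟨h1, h2.symm⟩⟩
    rw [hsets, key_half w hw t s hts i hi]
    congr 2
    rw [abs_of_nonneg (by linarith)]
end

section
/- Let w > 0 and let f : ℝ → ℝ be a nonnegative measurable function. For all real numbers r₁, r₂ with 0 < r₁ ≤ r₂, if f is integrable on the interval (0, w/r₁), then ∫_{0}^{w/r₂} f(u)·(1 − u·r₂/w) du ≤ ∫_{0}^{w/r₁} f(u)·(1 − u·r₁/w) du. Consequently, the function P(r) = ∫_{0}^{w/r} f(u)·(1 − u·r/w) du is antitone on (0, ∞). -/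
open MeasureTheory

lemma lsh_integrable_aux (w : ℝ) (hw : 0 < w) (f : ℝ → ℝ)
    (hf_meas : Measurable f) (hf_nonneg : ∀ u, 0 ≤ f u)
    (r b : ℝ) (hr : 0 < r) (hb : b ≤ w / r)
    (hf : IntegrableOn f (Set.Ioo 0 b)) :
    IntegrableOn (fun u => f u * (1 - u * r / w)) (Set.Ioo 0 b) := by
  apply Integrable.mono' hf
  · exact ((hf_meas.mul (by fun_prop : Measurable fun u : ℝ => 1 - u * r / w))).aestronglyMeasurable
  · filter_upwards [ae_restrict_mem measurableSet_Ioo] with u hu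
    have hu0 : 0 < u := hu.1
    have hub : u < w / r := lt_of_lt_of_le hu.2 hb
    have h1 : u * r / w ≤ 1 := by
      rw [div_le_one hw]
      calc u * r ≤ (w / r) * r := by nlinarith
      _ = w := div_mul_cancel₀ w hr.ne'
    have h0 : 0 ≤ u * r / w := by positivity
    rw [Real.norm_eq_abs, abs_mul, abs_of_nonneg (hf_nonneg u)]
    have : |1 - u * r / w| ≤ 1 := by rw [abs_le]; constructor <;> linarith
    nlinarith [hf_nonneg u]

/-- Substantiation of Assumption 1 of the paper: the collision probability
`P(r) = ∫_0^{w/r} f(u)·(1 − u·r/w) du` of the `l_p` LSH family is decreasing in `r`.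
The first part is the pointwise comparison for `0 < r₁ ≤ r₂`; consequently (second part)
`P` is antitone on `(0, ∞)`. -/
theorem collision_probability_antitone
    (w : ℝ) (hw : 0 < w) (f : ℝ → ℝ)
    (hf_meas : Measurable f) (hf_nonneg : ∀ u, 0 ≤ f u) :
    (∀ r₁ r₂ : ℝ, 0 < r₁ → r₁ ≤ r₂ →
      IntegrableOn f (Set.Ioo 0 (w / r₁)) →
      (∫ u in Set.Ioo 0 (w / r₂), f u * (1 - u * r₂ / w)) ≤
        ∫ u in Set.Ioo 0 (w / r₁), f u * (1 - u * r₁ / w)) ∧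
    ((∀ r : ℝ, 0 < r → IntegrableOn f (Set.Ioo 0 (w / r))) →
      AntitoneOn (fun r : ℝ => ∫ u in Set.Ioo 0 (w / r), f u * (1 - u * r / w))
        (Set.Ioi 0)) := by
  have main : ∀ r₁ r₂ : ℝ, 0 < r₁ → r₁ ≤ r₂ →
      IntegrableOn f (Set.Ioo 0 (w / r₁)) →
      (∫ u in Set.Ioo 0 (w / r₂), f u * (1 - u * r₂ / w)) ≤
        ∫ u in Set.Ioo 0 (w / r₁), f u * (1 - u * r₁ / w) := by
    intro r₁ r₂ hr₁ hr₁₂ hf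
    have hr₂ : 0 < r₂ := lt_of_lt_of_le hr₁ hr₁₂
    have hdiv : w / r₂ ≤ w / r₁ := by gcongr
    have hsub : Set.Ioo (0:ℝ) (w / r₂) ⊆ Set.Ioo 0 (w / r₁) :=
      Set.Ioo_subset_Ioo le_rfl hdiv
    have hf2 : IntegrableOn f (Set.Ioo 0 (w / r₂)) := hf.mono_set hsub
    have hint1 : IntegrableOn (fun u => f u * (1 - u * r₁ / w)) (Set.Ioo 0 (w / r₁)) :=
      lsh_integrable_aux w hw f hf_meas hf_nonneg r₁ _ hr₁ le_rfl hf
    have hint1' : IntegrableOn (fun u => f u * (1 - u * r₁ / w)) (Set.Ioo 0 (w / r₂)) :=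
      hint1.mono_set hsub
    have hint2 : IntegrableOn (fun u => f u * (1 - u * r₂ / w)) (Set.Ioo 0 (w / r₂)) :=
      lsh_integrable_aux w hw f hf_meas hf_nonneg r₂ _ hr₂ le_rfl hf2
    have step1 : (∫ u in Set.Ioo 0 (w / r₂), f u * (1 - u * r₂ / w)) ≤
        ∫ u in Set.Ioo 0 (w / r₂), f u * (1 - u * r₁ / w) := by
      apply setIntegral_mono_on hint2 hint1' measurableSet_Ioo
      intro u hu
      have h : u * r₁ / w ≤ u * r₂ / w := by
        gcongr
        exact hu.1.le
      nlinarith [hf_nonneg u]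
    have step2 : (∫ u in Set.Ioo 0 (w / r₂), f u * (1 - u * r₁ / w)) ≤
        ∫ u in Set.Ioo 0 (w / r₁), f u * (1 - u * r₁ / w) := by
      apply setIntegral_mono_set hint1
      · filter_upwards [ae_restrict_mem measurableSet_Ioo] with u hu
        have h1 : u * r₁ / w ≤ 1 := by
          rw [div_le_one hw]
          calc u * r₁ ≤ (w / r₁) * r₁ := by nlinarith [hu.1, hu.2]
          _ = w := div_mul_cancel₀ w hr₁.ne'
        have := hf_nonneg u
        simp only [Pi.zero_apply]
        nlinarith
      · exact HasSubset.Subset.eventuallyLE hsub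
    linarith
  refine ⟨main, fun hall r₁ hr₁ r₂ _ h₁₂ => main r₁ r₂ hr₁ h₁₂ (hall r₁ hr₁)⟩
end

section
/- Let 0 < P₂ < P₁ < 1, let ε ∈ (0,1), let z > 0, and let β be a positive integer with β ≥ ln(1/ε)·(1+z)² / (2·(P₁ − P₂)²). Set μ = ((z·P₁ + P₂)/(1+z))·β. If X₁,…,X_β are independent identically distributed {0,1}-valued random variables with Pr[X_i = 1] = p₁ for some p₁ ≥ P₁, then Pr[ ∑_{i=1}^β X_i < μ ] ≤ ε. -/
/-!
The collision count `∑ Xᵢ` has mean at least `β P₁`, while the threshold lies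
`β (P₁ - P₂) / (1 + z)` below `β P₁`. Hoeffding's inequality for the `[0, 1]`-valued
indicators bounds the probability of such a deficit by `exp (-2 β ((P₁ - P₂) / (1 + z)) ^ 2)`,
and the lower bound on `β` makes this at most `ε`.
-/

open MeasureTheory ProbabilityTheory Real

section Hoeffding

variable {Ω ι : Type*} [MeasurableSpace Ω] {μ : Measure Ω} [IsProbabilityMeasure μ]

lemma hasSubgaussianMGF_integral_sub_of_mem_Icc {X : Ω → ℝ} {a b : ℝ} (hm : AEMeasurable X μ)
    (hb : ∀ᵐ ω ∂μ, X ω ∈ Set.Icc a b) :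
    HasSubgaussianMGF (fun ω ↦ μ[X] - X ω) ((‖b - a‖₊ / 2) ^ 2) μ := by
  convert (hasSubgaussianMGF_of_mem_Icc hm hb).neg using 1
  ext ω
  simp

lemma measureReal_sum_le_sum_integral_sub_le [Fintype ι] {X : ι → Ω → ℝ}
    (hindep : iIndepFun X μ) (hm : ∀ i, AEMeasurable (X i) μ) {a b : ℝ}
    (hb : ∀ i, ∀ᵐ ω ∂μ, X i ω ∈ Set.Icc a b) {t : ℝ} (ht : 0 ≤ t) :
    μ.real {ω | ∑ i, X i ω ≤ ∑ i, μ[X i] - t} ≤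
      exp (-2 * t ^ 2 / (Fintype.card ι * (b - a) ^ 2)) := by
  have hindep' : iIndepFun (fun i ω ↦ μ[X i] - X i ω) μ :=
    (hindep.comp (fun i (x : ℝ) ↦ μ[X i] - x) fun i ↦ by fun_prop :)
  have := HasSubgaussianMGF.measure_sum_ge_le_of_iIndepFun hindep' (s := Finset.univ)
    (fun i _ ↦ hasSubgaussianMGF_integral_sub_of_mem_Icc (hm i) (hb i)) ht
  convert this using 2
  · ext ω
    simp only [Set.mem_ofPred_eq, Finset.sum_sub_distrib]
    constructor <;> intro h <;> linarith
  · have hvar : 2 * ((∑ _i : ι, (‖b - a‖₊ / 2) ^ 2 : NNReal) : ℝ) =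
        Fintype.card ι * (b - a) ^ 2 / 2 := by
      push_cast
      simp only [Finset.sum_const, Finset.card_univ, nsmul_eq_mul, norm_eq_abs, div_pow, sq_abs]
      ring
    rw [hvar, div_div_eq_mul_div]
    ring

end Hoeffding

lemma integral_eq_measureReal_of_forall_eq_zero_or_eq_one {Ω : Type*} [MeasurableSpace Ω]
    {μ : Measure Ω} {X : Ω → ℝ} (hm : Measurable X) (hX : ∀ ω, X ω = 0 ∨ X ω = 1) :
    μ[X] = μ.real {ω | X ω = 1} := by
  have : X = Set.indicator {ω | X ω = 1} 1 := by
    ext ω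
    rcases hX ω with h | h <;> simp [h]
  conv_lhs => rw [this]
  exact integral_indicator_one (hm (measurableSet_singleton 1))

lemma exp_neg_two_mul_sq_div_le {ε n d s : ℝ} (hε : 0 < ε) (hd : d ≠ 0) (hs : s ≠ 0)
    (hn : log (1 / ε) * s ^ 2 / (2 * d ^ 2) ≤ n) :
    exp (-2 * (n * (d / s)) ^ 2 / n) ≤ ε := by
  have hexp : -2 * (n * (d / s)) ^ 2 / n = -(2 * n * d ^ 2 / s ^ 2) := by
    rcases eq_or_ne n 0 with rfl | hn
    · simp -- both sides vanish at `n = 0` since `x / 0 = 0`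
    · field_simp
  rw [div_le_iff₀ (by positivity), one_div, log_inv] at hn
  rw [hexp, ← le_log_iff_exp_le hε, neg_le, le_div_iff₀ (by positivity)]
  linarith

theorem near_point_is_frequent_general
    (P₁ P₂ ε z : ℝ) (hP₁₂ : P₂ < P₁)
    (hε : ε ∈ Set.Ioo (0 : ℝ) 1) (hz : 0 < z)
    (β : ℕ)
    (hβ : Real.log (1 / ε) * (1 + z) ^ 2 / (2 * (P₁ - P₂) ^ 2) ≤ (β : ℝ))
    (Ω : Type*) [MeasurableSpace Ω] (μ : Measure Ω) [IsProbabilityMeasure μ]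
    (X : Fin β → Ω → ℝ) (hXmeas : ∀ i, Measurable (X i))
    (hX01 : ∀ i ω, X i ω = 0 ∨ X i ω = 1)
    (hindep : iIndepFun X μ)
    (p₁ : ℝ) (hp₁ : P₁ ≤ p₁)
    (hdist : ∀ i, μ {ω | X i ω = 1} = ENNReal.ofReal p₁) :
    μ {ω | (∑ i, X i ω) < ((z * P₁ + P₂) / (1 + z)) * (β : ℝ)} ≤ ENNReal.ofReal ε := by
  have hgap : 0 < (P₁ - P₂) / (1 + z) := div_pos (sub_pos.2 hP₁₂) (by linarith)
  have hmean (i : Fin β) : P₁ ≤ μ[X i] := by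
    rw [integral_eq_measureReal_of_forall_eq_zero_or_eq_one (hXmeas i) (hX01 i), measureReal_def,
      hdist i, ENNReal.toReal_ofReal']
    exact hp₁.trans (le_max_left _ _)
  have hsubset : {ω | ∑ i, X i ω < ((z * P₁ + P₂) / (1 + z)) * β} ⊆
      {ω | ∑ i, X i ω ≤ ∑ i, μ[X i] - β * ((P₁ - P₂) / (1 + z))} := by
    have hthreshold : (z * P₁ + P₂) / (1 + z) = P₁ - (P₁ - P₂) / (1 + z) := by
      field_simp [(by linarith : 1 + z ≠ 0)]
      ring
    intro ω hω
    have := Finset.sum_le_sum fun i (_ : i ∈ Finset.univ) ↦ hmean i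
    simp only [Set.mem_ofPred_eq, hthreshold, Finset.sum_const, Finset.card_univ,
      Fintype.card_fin, nsmul_eq_mul] at hω this ⊢
    linarith
  have hX_mem_Icc (i : Fin β) : ∀ᵐ ω ∂μ, X i ω ∈ Set.Icc 0 1 :=
    ae_of_all _ fun ω ↦ by rcases hX01 i ω with h | h <;> simp [h]
  rw [ENNReal.le_ofReal_iff_toReal_le (measure_ne_top _ _) hε.1.le]
  calc (μ _).toReal ≤ μ.real {ω | ∑ i, X i ω ≤ ∑ i, μ[X i] - β * ((P₁ - P₂) / (1 + z))} :=
        measureReal_mono hsubset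
    _ ≤ exp (-2 * (β * ((P₁ - P₂) / (1 + z))) ^ 2 / (Fintype.card (Fin β) * (1 - 0) ^ 2)) :=
      measureReal_sum_le_sum_integral_sub_le hindep (fun i ↦ (hXmeas i).aemeasurable) hX_mem_Icc
        (by positivity)
    _ ≤ ε := by
      simpa using exp_neg_two_mul_sq_div_le hε.1 (sub_pos.2 hP₁₂).ne' (by linarith) hβ

/-- The guarantee `Pr[𝒫₁' holds] ≥ 1 − ε` of the paper (via Hoeffding's inequality):
with `β ≥ ln(1/ε)·(1+z)²/(2(P₁ − P₂)²)` hash tables and collision threshold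
`μ = ((z·P₁ + P₂)/(1+z))·β`, a point whose per-table collision probability is `p₁ ≥ P₁`
fails to collect `μ` collisions with probability at most `ε`. -/
theorem near_point_is_frequent
    (P₁ P₂ ε z : ℝ) (hP₂ : 0 < P₂) (hP₁₂ : P₂ < P₁) (hP₁ : P₁ < 1)
    (hε : ε ∈ Set.Ioo (0 : ℝ) 1) (hz : 0 < z)
    (β : ℕ) (hβpos : 0 < β)
    (hβ : Real.log (1 / ε) * (1 + z) ^ 2 / (2 * (P₁ - P₂) ^ 2) ≤ (β : ℝ))
    (Ω : Type*) [MeasurableSpace Ω] (μ : Measure Ω) [IsProbabilityMeasure μ]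
    (X : Fin β → Ω → ℝ) (hXmeas : ∀ i, Measurable (X i))
    (hX01 : ∀ i ω, X i ω = 0 ∨ X i ω = 1)
    (hindep : iIndepFun X μ)
    (p₁ : ℝ) (hp₁ : P₁ ≤ p₁)
    (hdist : ∀ i, μ {ω | X i ω = 1} = ENNReal.ofReal p₁) :
    μ {ω | (∑ i, X i ω) < ((z * P₁ + P₂) / (1 + z)) * (β : ℝ)} ≤ ENNReal.ofReal ε :=
  near_point_is_frequent_general P₁ P₂ ε z hP₁₂ hε hz β hβ Ω μ X hXmeas hX01 hindep p₁ hp₁ hdist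
end

section
/- Let 0 < P₂ < P₁ < 1, let ε ∈ (0,1), let γ ∈ (0,2), set z = √( ln(2/γ) / ln(1/ε) ), and let β be a positive integer with β ≥ ln(1/ε)·(1+z)² / (2·(P₁ − P₂)²). Set μ = ((z·P₁ + P₂)/(1+z))·β. If X₁,…,X_β are independent identically distributed {0,1}-valued random variables with Pr[X_i = 1] = p₂ for some p₂ ≤ P₂, then Pr[ ∑_{i=1}^β X_i ≥ μ ] ≤ γ/2. -/
/-!
Centred, each `X i - μ[X i]` lies in an interval of length `1`, so by Hoeffding's lemma it is
sub-Gaussian with parameter `1/4`, and Hoeffding's inequality bounds the probability that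
`∑ X i` exceeds its mean by `δβ` by `exp (-2δ²β)`. With threshold `c = (z P₁ + P₂)/(1 + z)` and
means at most `P₂` we may take `δ = c - P₂ = z (P₁ - P₂)/(1 + z)`; the lower bound on `β` and
`z² ln(1/ε) = ln(2/γ)` then give `2δ²β ≥ ln(2/γ)`.
-/

open MeasureTheory ProbabilityTheory Real

section Hoeffding

variable {Ω ι : Type*} [MeasurableSpace Ω] {μ : Measure Ω} [IsProbabilityMeasure μ]

omit [IsProbabilityMeasure μ] in
lemma integral_eq_measureReal_of_forall_eq_zero_or_eq_one_s14 {Y : Ω → ℝ} (hY : Measurable Y)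
    (hY01 : ∀ ω, Y ω = 0 ∨ Y ω = 1) : μ[Y] = μ.real {ω | Y ω = 1} := by
  have hind : Y = {ω | Y ω = 1}.indicator 1 := by
    funext ω
    rcases hY01 ω with h | h <;> simp [h]
  conv_lhs => rw [hind]
  exact integral_indicator_one (hY (measurableSet_singleton 1))

lemma measureReal_sum_ge_le_of_iIndepFun_of_mem_Icc_zero_one [Fintype ι] {X : ι → Ω → ℝ}
    (hindep : iIndepFun X μ) (hmeas : ∀ i, AEMeasurable (X i) μ)
    (hX : ∀ i, ∀ᵐ ω ∂μ, X i ω ∈ Set.Icc 0 1) {p δ : ℝ} (hmean : ∀ i, μ[X i] ≤ p)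
    (hδ : 0 ≤ δ) :
    μ.real {ω | (p + δ) * Fintype.card ι ≤ ∑ i, X i ω} ≤
      exp (-2 * δ ^ 2 * Fintype.card ι) := by
  set Y : ι → Ω → ℝ := fun i ω ↦ X i ω - μ[X i]
  have hY_indep : iIndepFun Y μ := by
    exact hindep.comp (fun i x ↦ x - μ[X i]) fun i ↦ measurable_id.sub_const _
  have hY_subG : ∀ i ∈ Finset.univ, HasSubgaussianMGF (Y i) 4⁻¹ μ := fun i _ ↦ by
    convert hasSubgaussianMGF_of_mem_Icc (hmeas i) (hX i)
    norm_num
  have hsub : {ω | (p + δ) * Fintype.card ι ≤ ∑ i, X i ω} ⊆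
      {ω | δ * Fintype.card ι ≤ ∑ i, Y i ω} := by
    intro ω hω
    have hsum : ∑ i, μ[X i] ≤ p * Fintype.card ι := by
      simpa [mul_comm] using Finset.sum_le_sum fun i (_ : i ∈ Finset.univ) ↦ hmean i
    simp only [Set.mem_ofPred_eq, Y, Finset.sum_sub_distrib] at hω ⊢
    linarith
  calc μ.real {ω | (p + δ) * Fintype.card ι ≤ ∑ i, X i ω}
      ≤ μ.real {ω | δ * Fintype.card ι ≤ ∑ i, Y i ω} := measureReal_mono hsub
    _ ≤ exp (-(δ * Fintype.card ι) ^ 2 / (2 * ∑ _i : ι, ((4 : NNReal)⁻¹ : NNReal))) :=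
      HasSubgaussianMGF.measure_sum_ge_le_of_iIndepFun hY_indep hY_subG (by positivity)
    _ = exp (-2 * δ ^ 2 * Fintype.card ι) := by
      rcases eq_or_ne (Fintype.card ι : ℝ) 0 with hn | hn
      · simp [hn]
      · congr 1
        simp only [Finset.sum_const, Finset.card_univ, nsmul_eq_mul, NNReal.coe_mul,
          NNReal.coe_natCast, NNReal.coe_inv, NNReal.coe_ofNat, neg_mul]
        field_simp
        ring

end Hoeffding

lemma le_two_mul_sq_sub_mul_of_sqrt_div {P₁ P₂ L₁ L₂ z β : ℝ} (hP : P₁ ≠ P₂) (hL₁ : 0 < L₁)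
    (hL₂ : 0 ≤ L₂) (hz : z = √(L₂ / L₁)) (hβ : L₁ * (1 + z) ^ 2 / (2 * (P₁ - P₂) ^ 2) ≤ β) :
    L₂ ≤ 2 * ((z * P₁ + P₂) / (1 + z) - P₂) ^ 2 * β := by
  have hz0 : 0 ≤ z := hz ▸ sqrt_nonneg _
  have hzL : z ^ 2 * L₁ = L₂ := by
    rw [hz, sq_sqrt (div_nonneg hL₂ hL₁.le), div_mul_cancel₀ _ hL₁.ne']
  have hgap : (z * P₁ + P₂) / (1 + z) - P₂ = z * (P₁ - P₂) / (1 + z) := by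
    field_simp
    ring
  have hP' : (P₁ - P₂) ^ 2 ≠ 0 := pow_ne_zero 2 (sub_ne_zero.mpr hP)
  calc L₂ = 2 * (z * (P₁ - P₂) / (1 + z)) ^ 2 * (L₁ * (1 + z) ^ 2 / (2 * (P₁ - P₂) ^ 2)) := by
        rw [← hzL]
        field_simp
    _ ≤ 2 * ((z * P₁ + P₂) / (1 + z) - P₂) ^ 2 * β := by
        rw [hgap]
        gcongr

theorem far_point_is_frequent_prob_le_general
    (P₁ P₂ ε γ z : ℝ) (hP₂ : 0 < P₂) (hP₁₂ : P₂ < P₁)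
    (hε : ε ∈ Set.Ioo (0 : ℝ) 1) (hγ : γ ∈ Set.Ioo (0 : ℝ) 2)
    (hz : z = Real.sqrt (Real.log (2 / γ) / Real.log (1 / ε)))
    (β : ℕ)
    (hβ : Real.log (1 / ε) * (1 + z) ^ 2 / (2 * (P₁ - P₂) ^ 2) ≤ (β : ℝ))
    (Ω : Type*) [MeasurableSpace Ω] (μ : Measure Ω) [IsProbabilityMeasure μ]
    (X : Fin β → Ω → ℝ) (hXmeas : ∀ i, Measurable (X i))
    (hX01 : ∀ i ω, X i ω = 0 ∨ X i ω = 1)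
    (hindep : iIndepFun X μ)
    (p₂ : ℝ) (hp₂ : p₂ ≤ P₂)
    (hdist : ∀ i, μ {ω | X i ω = 1} = ENNReal.ofReal p₂) :
    μ {ω | ((z * P₁ + P₂) / (1 + z)) * (β : ℝ) ≤ ∑ i, X i ω} ≤ ENNReal.ofReal (γ / 2) := by
  obtain ⟨hε0, hε1⟩ := hε
  obtain ⟨hγ0, hγ2⟩ := hγ
  have hz0 : 0 ≤ z := hz ▸ sqrt_nonneg _
  have hgap : 0 ≤ (z * P₁ + P₂) / (1 + z) - P₂ := by
    rw [sub_nonneg, le_div_iff₀ (by linarith)]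
    nlinarith
  have hmean : ∀ i, μ[X i] ≤ P₂ := fun i ↦ by
    rw [integral_eq_measureReal_of_forall_eq_zero_or_eq_one_s14 (hXmeas i) (hX01 i), measureReal_def,
      hdist i, ENNReal.toReal_ofReal']
    exact max_le hp₂ hP₂.le
  have hunit : ∀ i, ∀ᵐ ω ∂μ, X i ω ∈ Set.Icc 0 1 := fun i ↦ ae_of_all _ fun ω ↦ by
    rcases hX01 i ω with h | h <;> simp [h]
  have hhoeffding := measureReal_sum_ge_le_of_iIndepFun_of_mem_Icc_zero_one hindep
    (fun i ↦ (hXmeas i).aemeasurable) hunit hmean hgap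
  rw [add_sub_cancel, Fintype.card_fin] at hhoeffding
  have hexponent := le_two_mul_sq_sub_mul_of_sqrt_div hP₁₂.ne' (log_pos (one_lt_one_div hε0 hε1))
    (log_nonneg (by rw [le_div_iff₀ hγ0]; linarith)) hz hβ
  rw [← ofReal_measureReal]
  refine ENNReal.ofReal_le_ofReal (hhoeffding.trans ?_)
  calc exp (-2 * ((z * P₁ + P₂) / (1 + z) - P₂) ^ 2 * β) ≤ exp (-log (2 / γ)) := by
        gcongr
        linarith
    _ = γ / 2 := by rw [exp_neg, exp_log (by positivity), inv_div]

/-- The per-point false-positive bound underlying the paper's guarantee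
`Pr[𝒫₂' holds] > 1/2` (via Hoeffding's inequality): with
`z = √(ln(2/γ)/ln(1/ε))`, `β ≥ ln(1/ε)·(1+z)²/(2(P₁ − P₂)²)` hash tables and collision
threshold `μ = ((z·P₁ + P₂)/(1+z))·β`, a point whose per-table collision probability is
`p₂ ≤ P₂` collects at least `μ` collisions with probability at most `γ/2`. -/
theorem far_point_is_frequent_prob_le
    (P₁ P₂ ε γ z : ℝ) (hP₂ : 0 < P₂) (hP₁₂ : P₂ < P₁) (hP₁ : P₁ < 1)
    (hε : ε ∈ Set.Ioo (0 : ℝ) 1) (hγ : γ ∈ Set.Ioo (0 : ℝ) 2)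
    (hz : z = Real.sqrt (Real.log (2 / γ) / Real.log (1 / ε)))
    (β : ℕ) (hβpos : 0 < β)
    (hβ : Real.log (1 / ε) * (1 + z) ^ 2 / (2 * (P₁ - P₂) ^ 2) ≤ (β : ℝ))
    (Ω : Type*) [MeasurableSpace Ω] (μ : Measure Ω) [IsProbabilityMeasure μ]
    (X : Fin β → Ω → ℝ) (hXmeas : ∀ i, Measurable (X i))
    (hX01 : ∀ i ω, X i ω = 0 ∨ X i ω = 1)
    (hindep : iIndepFun X μ)
    (p₂ : ℝ) (hp₂ : p₂ ≤ P₂)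
    (hdist : ∀ i, μ {ω | X i ω = 1} = ENNReal.ofReal p₂) :
    μ {ω | ((z * P₁ + P₂) / (1 + z)) * (β : ℝ) ≤ ∑ i, X i ω} ≤ ENNReal.ofReal (γ / 2) :=
  far_point_is_frequent_prob_le_general P₁ P₂ ε γ z hP₂ hP₁₂ hε hγ hz β hβ Ω μ X hXmeas hX01 hindep
    p₂ hp₂ hdist
end
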